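/- arXiv:2307.08093 — 3 statements merged into one kernel-verified Lean document; each statement's English description precedes it below -/
import Mathlib

section
/- Let A, B be symmetric positive definite C×C matrices. Among all C×C matrices Phi such that Phi can be written as Phi = A T^{-T} for some invertible T with T B T^T ⪯ A in the sense that Phi B^{-1} Phi^T ⪯ A, the trace tr(Phi) is maximized by Phi = A B^{1/2} (B^{1/2} A B^{1/2})^{-1/2} B^{1/2}, and the maximum value is tr((B^{1/2} A B^{1/2})^{1/2}). -/
open Matrix

lemma psd_trace_nonneg {n : ℕ} {M : Matrix (Fin n) (Fin n) ℝ}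
    (hM : M.PosSemidef) : 0 ≤ M.trace := by
  rw [Matrix.trace]
  apply Finset.sum_nonneg
  intro i _
  exact hM.diag_nonneg

lemma psd_trace_mul_nonneg {n : ℕ} {P Q : Matrix (Fin n) (Fin n) ℝ}
    (hP : P.PosSemidef) (hQ : Q.PosSemidef) : 0 ≤ (P * Q).trace := by
  open scoped MatrixOrder in
  obtain ⟨L, rfl⟩ := CStarAlgebra.nonneg_iff_eq_star_mul_self.mp hQ.nonneg
  simp only [star_eq_conjTranspose]
  have h1 : (P * (Lᴴ * L)).trace = (L * P * Lᴴ).trace := by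
    rw [← Matrix.mul_assoc]; exact Matrix.trace_mul_cycle P Lᴴ L
  rw [h1]
  exact psd_trace_nonneg (hP.mul_mul_conjTranspose_same L)

/-- Olkin–Pukelsheim trace maximization: among all Phi with Phi B⁻¹ Phiᵀ ⪯ A (Loewner),
tr(Phi) is maximized by Phi₀ = A B^{1/2} (B^{1/2} A B^{1/2})^{-1/2} B^{1/2}, with
maximum value tr((B^{1/2} A B^{1/2})^{1/2}). Here Rb = B^{1/2} and S = (Rb A Rb)^{1/2}. -/
theorem stmt_7 {C : ℕ} (A B Rb S : Matrix (Fin C) (Fin C) ℝ)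
    (hA : A.PosDef) (hB : B.PosDef)
    (hRb : Rb.PosDef) (hRb2 : Rb * Rb = B)
    (hS : S.PosDef) (hS2 : S * S = Rb * A * Rb) :
    (∀ Φ : Matrix (Fin C) (Fin C) ℝ, (A - Φ * B⁻¹ * Φᵀ).PosSemidef →
        Φ.trace ≤ (A * Rb * S⁻¹ * Rb).trace) ∧
      (A * Rb * S⁻¹ * Rb).trace = S.trace := by
  have hRbinv : IsUnit Rb.det := isUnit_iff_ne_zero.mpr hRb.det_pos.ne'
  have hSinv : IsUnit S.det := isUnit_iff_ne_zero.mpr hS.det_pos.ne'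
  have hRbsym : Rbᵀ = Rb := hRb.isHermitian.eq
  have hSsym : Sᵀ = S := hS.isHermitian.eq
  have hval : (A * Rb * S⁻¹ * Rb).trace = S.trace := by
    rw [Matrix.trace_mul_cycle]
    have h : Rb * (A * Rb) = S * S := by rw [← Matrix.mul_assoc, hS2]
    rw [h, Matrix.mul_assoc, Matrix.mul_nonsing_inv _ hSinv, Matrix.mul_one]
  refine ⟨fun Φ hΦ => ?_, hval⟩
  rw [hval]
  -- M = Rb Φ Rb⁻¹
  set M : Matrix (Fin C) (Fin C) ℝ := Rb * Φ * Rb⁻¹ with hM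
  have hBinv : B⁻¹ = Rb⁻¹ * Rb⁻¹ := by
    rw [← hRb2, Matrix.mul_inv_rev]
  have htrM : M.trace = Φ.trace := by
    rw [hM, Matrix.trace_mul_cycle, Matrix.nonsing_inv_mul _ hRbinv,
      Matrix.one_mul]
  -- S*S - M*Mᵀ is PSD
  have hRbinvT : (Rb⁻¹)ᵀ = Rb⁻¹ := by
    rw [Matrix.transpose_nonsing_inv, hRbsym]
  have hMT : Mᵀ = Rb⁻¹ * Φᵀ * Rb := by
    rw [hM]
    simp [Matrix.transpose_mul, hRbsym, hRbinvT, Matrix.mul_assoc]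
  have hconj : S * S - M * Mᵀ = Rb * (A - Φ * B⁻¹ * Φᵀ) * Rbᴴ := by
    have hRbH : Rbᴴ = Rb := by
      exact hRb.isHermitian.eq
    rw [hRbH, Matrix.mul_sub, Matrix.sub_mul, ← hS2, hM, hMT, hBinv]
    congr 1
    simp [Matrix.mul_assoc]
  have hpsd1 : (S * S - M * Mᵀ).PosSemidef := by
    rw [hconj]
    exact hΦ.mul_mul_conjTranspose_same Rb
  -- key inequality: 2 tr(M) ≤ tr(Mᵀ S⁻¹ M) + tr(S)
  have hSinvPD : (S⁻¹).PosDef := hS.inv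
  have hpsd2 : ((Mᵀ - S) * S⁻¹ * (Mᵀ - S)ᴴ).PosSemidef :=
    hSinvPD.posSemidef.mul_mul_conjTranspose_same (Mᵀ - S)
  have hexp : (Mᵀ - S) * S⁻¹ * (Mᵀ - S)ᴴ
      = Mᵀ * S⁻¹ * M - Mᵀ - M + S := by
    have hH : (Mᵀ - S)ᴴ = M - S := by
      have : (Mᵀ - S)ᴴ = (Mᵀ - S)ᵀ := rfl
      rw [this, Matrix.transpose_sub, Matrix.transpose_transpose, hSsym]
    have hSinvT : S * S⁻¹ = 1 := Matrix.mul_nonsing_inv _ hSinv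
    have hSinvT2 : S⁻¹ * S = 1 := Matrix.nonsing_inv_mul _ hSinv
    have e1 : (Mᵀ - S) * S⁻¹ = Mᵀ * S⁻¹ - 1 := by
      rw [Matrix.sub_mul, hSinvT]
    rw [hH, e1, Matrix.sub_mul, Matrix.mul_sub, Matrix.mul_sub,
      Matrix.one_mul, Matrix.one_mul, Matrix.mul_assoc Mᵀ S⁻¹ S, hSinvT2,
      Matrix.mul_one]
    abel
  have ht2 : 0 ≤ (Mᵀ * S⁻¹ * M).trace - M.trace - M.trace + S.trace := by
    have := psd_trace_nonneg (hexp ▸ hpsd2)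
    have htMT : (Mᵀ).trace = M.trace := Matrix.trace_transpose M
    simpa [Matrix.trace_sub, Matrix.trace_add, htMT] using this
  -- tr(Mᵀ S⁻¹ M) = tr(S⁻¹ (M Mᵀ)) ≤ tr(S)
  have ht3 : (Mᵀ * S⁻¹ * M).trace ≤ S.trace := by
    have h1 : (Mᵀ * S⁻¹ * M).trace = (S⁻¹ * (M * Mᵀ)).trace := by
      rw [Matrix.trace_mul_cycle, Matrix.trace_mul_comm]
    have h2 : 0 ≤ (S⁻¹ * (S * S - M * Mᵀ)).trace :=
      psd_trace_mul_nonneg hSinvPD.posSemidef hpsd1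
    have h3 : S⁻¹ * (S * S - M * Mᵀ) = S - S⁻¹ * (M * Mᵀ) := by
      rw [Matrix.mul_sub, ← Matrix.mul_assoc, Matrix.nonsing_inv_mul _ hSinv,
        Matrix.one_mul]
    rw [h3, Matrix.trace_sub] at h2
    linarith [h1 ▸ (by linarith : (S⁻¹ * (M * Mᵀ)).trace ≤ S.trace)]
  rw [← htrM]
  linarith
end

section
/- Let A, B be symmetric positive definite C×C matrices. Then tr((B^{1/2} A B^{1/2})^{1/2}) = tr((A^{1/2} B A^{1/2})^{1/2}). -/
open Matrix

/-- tr((B^{1/2} A B^{1/2})^{1/2}) = tr((A^{1/2} B A^{1/2})^{1/2}) for symmetric PD A, B.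
Ra = A^{1/2}, Rb = B^{1/2}, S1 = (Rb A Rb)^{1/2}, S2 = (Ra B Ra)^{1/2}. -/
theorem stmt_8 {C : ℕ} (A B Ra Rb S1 S2 : Matrix (Fin C) (Fin C) ℝ)
    (hA : A.PosDef) (hB : B.PosDef)
    (hRa : Ra.PosDef) (hRa2 : Ra * Ra = A)
    (hRb : Rb.PosDef) (hRb2 : Rb * Rb = B)
    (hS1 : S1.PosDef) (hS12 : S1 * S1 = Rb * A * Rb)
    (hS2 : S2.PosDef) (hS22 : S2 * S2 = Ra * B * Ra) :
    S1.trace = S2.trace := by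
  obtain ⟨M, hM⟩ : ∃ M' : Matrix (Fin C) (Fin C) ℝ, M' = Rb * Ra := ⟨_, rfl⟩
  have hdet : IsUnit S1.det := hS1.det_pos.ne'.isUnit
  have hinv : S1⁻¹ * S1 = 1 := nonsing_inv_mul _ hdet
  have hinv' : S1 * S1⁻¹ = 1 := mul_nonsing_inv _ hdet
  obtain ⟨U, hU⟩ : ∃ U' : Matrix (Fin C) (Fin C) ℝ, U' = S1⁻¹ * M := ⟨_, rfl⟩
  have hMH : Mᴴ = Ra * Rb := by
    rw [hM, conjTranspose_mul, hRa.1.eq, hRb.1.eq]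
  have hS1inv : S1⁻¹ᴴ = S1⁻¹ := hS1.1.inv.eq
  have hMMH : M * Mᴴ = S1 * S1 := by
    rw [hMH, hS12, hM, ← hRa2]; noncomm_ring
  have hMHM : Mᴴ * M = S2 * S2 := by
    rw [hMH, hS22, hM, ← hRb2]; noncomm_ring
  have hUH : Uᴴ = Mᴴ * S1⁻¹ := by rw [hU, conjTranspose_mul, hS1inv]
  have hUUH : U * Uᴴ = 1 := by
    rw [hUH, hU, Matrix.mul_assoc, ← Matrix.mul_assoc M, hMMH]
    calc S1⁻¹ * (S1 * S1 * S1⁻¹) = (S1⁻¹ * S1) * (S1 * S1⁻¹) := by noncomm_ring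
    _ = 1 := by rw [hinv, hinv', one_mul]
  have key : Uᴴ * S1 * U = S2 := by
    open scoped MatrixOrder in refine (CFC.sqrt_sq (Uᴴ * S1 * U) (hS1.posSemidef.conjTranspose_mul_mul_same U).nonneg).symm.trans ((congrArg CFC.sqrt ?_).trans (CFC.sqrt_sq S2 hS2.posSemidef.nonneg))
    have : (Uᴴ * S1 * U) * (Uᴴ * S1 * U) = Uᴴ * S1 * (U * Uᴴ) * S1 * U := by noncomm_ring
    rw [sq, sq, this, hUUH, Matrix.mul_one, hUH, hU]
    calc Mᴴ * S1⁻¹ * S1 * S1 * (S1⁻¹ * M)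
        = Mᴴ * (S1⁻¹ * S1) * ((S1 * S1⁻¹) * M) := by noncomm_ring
      _ = Mᴴ * M := by rw [hinv, hinv']; noncomm_ring
      _ = S2 * S2 := hMHM
  calc S1.trace = (S1 * (U * Uᴴ)).trace := by rw [hUUH, Matrix.mul_one]
    _ = (Uᴴ * S1 * U).trace := by
        rw [← Matrix.mul_assoc, trace_mul_cycle]
    _ = S2.trace := by rw [key]
end

section
/- For symmetric positive definite C×C matrices A and B, the matrix Phi = A B^{1/2}(B^{1/2} A B^{1/2})^{-1/2} B^{1/2} satisfies Phi B^{-1} Phi^T = A. -/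
open Matrix

/-- Phi = A B^{1/2} (B^{1/2} A B^{1/2})^{-1/2} B^{1/2} satisfies Phi B⁻¹ Phiᵀ = A,
with Rb = B^{1/2} and S = (Rb A Rb)^{1/2}. -/
theorem stmt_18 {C : ℕ} (A B Rb S : Matrix (Fin C) (Fin C) ℝ)
    (hA : A.PosDef) (hB : B.PosDef)
    (hRb : Rb.PosDef) (hRb2 : Rb * Rb = B)
    (hS : S.PosDef) (hS2 : S * S = Rb * A * Rb) :
    (A * Rb * S⁻¹ * Rb) * B⁻¹ * (A * Rb * S⁻¹ * Rb)ᵀ = A := by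
  have hAt : Aᵀ = A := by simpa using hA.1.eq
  have hRt : Rbᵀ = Rb := by simpa using hRb.1.eq
  have hSt : Sᵀ = S := by simpa using hS.1.eq
  have hAu : IsUnit A.det := isUnit_iff_ne_zero.mpr hA.det_pos.ne'
  have hRu : IsUnit Rb.det := isUnit_iff_ne_zero.mpr hRb.det_pos.ne'
  have hRR : Rb * Rb⁻¹ = 1 := Matrix.mul_nonsing_inv Rb hRu
  have hRR' : Rb⁻¹ * Rb = 1 := Matrix.nonsing_inv_mul Rb hRu
  have hAA' : A * A⁻¹ = 1 := Matrix.mul_nonsing_inv A hAu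
  have hBinv : B⁻¹ = Rb⁻¹ * Rb⁻¹ := by rw [← hRb2, Matrix.mul_inv_rev]
  have hSinv : S⁻¹ * S⁻¹ = Rb⁻¹ * A⁻¹ * Rb⁻¹ := by
    rw [← Matrix.mul_inv_rev, hS2, Matrix.mul_inv_rev, Matrix.mul_inv_rev, mul_assoc]
  have hSit : S⁻¹ᵀ = S⁻¹ := by rw [Matrix.transpose_nonsing_inv, hSt]
  rw [Matrix.transpose_mul, Matrix.transpose_mul, Matrix.transpose_mul, hAt, hRt, hSit, hBinv]
  simp only [← Matrix.mul_assoc]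
  rw [mul_assoc (A * Rb * S⁻¹) Rb Rb⁻¹, hRR, mul_one,
      mul_assoc (A * Rb * S⁻¹) Rb⁻¹ Rb, hRR', mul_one,
      mul_assoc (A * Rb) S⁻¹ S⁻¹, hSinv]
  simp only [← Matrix.mul_assoc]
  rw [mul_assoc A Rb Rb⁻¹, hRR, mul_one, hAA', one_mul, hRR', one_mul]
end
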